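/- Let (M,⊗,1,σ) be a symmetric monoidal category and let A be a cocommutative Hopf monoid in M. Then A is commutative, i.e. m_A∘σ_{A,A} = m_A, if and only if the adjoint morphism satisfies ad_A = ε_A⊗Id_A. As a consequence, if A is commutative then every monomorphism i:K→A in Hopf_coc(M) is normal. -/

import Mathlib

/-!
Common infrastructure for formalizing results on cocommutative Hopf monoids
in (abelian) symmetric monoidal categories.
-/

open CategoryTheory MonoidalCategory CategoryTheory.Limits

universe v u

namespace HopfSemiabelian

variable {C : Type u} [Category.{v} C] [MonoidalCategory.{v} C]

section HopfBasics
variable [BraidedCategory C]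

/-- The underlying object in `C` of a Hopf monoid. -/
abbrev hCar (H : Hopf C) : C := H.X
/-- The multiplication of a Hopf monoid. -/
abbrev hMul (H : Hopf C) : hCar H ⊗ hCar H ⟶ hCar H := MonObj.mul
/-- The unit of a Hopf monoid. -/
abbrev hOne (H : Hopf C) : 𝟙_ C ⟶ hCar H := MonObj.one
/-- The comultiplication of a Hopf monoid. -/
abbrev hComul (H : Hopf C) : hCar H ⟶ hCar H ⊗ hCar H := ComonObj.comul
/-- The counit of a Hopf monoid. -/
abbrev hCounit (H : Hopf C) : hCar H ⟶ 𝟙_ C := ComonObj.counit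
/-- The antipode of a Hopf monoid. -/
abbrev hS (H : Hopf C) : hCar H ⟶ hCar H := HopfObj.antipode

/-- The underlying comonoid in `C` of a Hopf monoid. -/
def hComon (H : Hopf C) : Comon C where
  X := hCar H
  comon :=
    { counit := hCounit H
      comul := hComul H
      counit_comul := ComonObj.counit_comul (hCar H)
      comul_counit := ComonObj.comul_counit (hCar H)
      comul_assoc := ComonObj.comul_assoc (hCar H) }

/-- The underlying monoid of a Hopf monoid. -/
abbrev hMon (H : Hopf C) : Mon C := { X := hCar H }

/-- A Hopf monoid is cocommutative if `σ ∘ Δ = Δ`. -/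
def IsCocomm (H : Hopf C) : Prop := hComul H ≫ (β_ (hCar H) (hCar H)).hom = hComul H

variable (C) in
/-- `Hopf_coc(M)`: the category of cocommutative Hopf monoids in `C`,
as a full subcategory of `Hopf_ C` (morphisms are bimonoid morphisms). -/
def HopfCoc := ObjectProperty.FullSubcategory (fun H : Hopf C => IsCocomm H)

instance : Category (HopfCoc C) := ObjectProperty.FullSubcategory.category _

/-- The underlying morphism in `C` of a morphism of cocommutative Hopf monoids. -/
def uhom {K A : HopfCoc C} (f : K ⟶ A) : hCar K.obj ⟶ hCar A.obj := f.hom.hom.hom.hom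

/-- The underlying morphism in `C` of a morphism of Hopf monoids. -/
def uhomH {K A : Hopf C} (f : K ⟶ A) : hCar K ⟶ hCar A := f.hom.hom.hom

/-- The zero morphism between two Hopf monoids (factoring through the trivial one). -/
def hzero (A B : Hopf C) : A ⟶ B :=
  ⟨(Bimon.toTrivial A.toBimon ≫ Bimon.trivialTo B.toBimon : A.toBimon ⟶ B.toBimon)⟩

/-- The zero morphism between two cocommutative Hopf monoids. -/
def zeroH (A B : HopfCoc C) : A ⟶ B := ⟨hzero A.obj B.obj⟩

end HopfBasics

section Adjoint
variable [BraidedCategory C]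

/-- The adjoint morphism `ad = m(m ⊗ S)(Id ⊗ σ)(Δ ⊗ Id) : A ⊗ A ⟶ A`. -/
def adOf {A : C} (m : A ⊗ A ⟶ A) (Δ : A ⟶ A ⊗ A) (S : A ⟶ A) : A ⊗ A ⟶ A :=
  (Δ ▷ A) ≫ (α_ A A A).hom ≫ (A ◁ (β_ A A).hom) ≫ (α_ A A A).inv ≫ (m ⊗ₘ S) ≫ m

/-- The right adjoint morphism `ad' = m(m ⊗ Id)(σ ⊗ Id)(Id ⊗ (S ⊗ Id)Δ) : A ⊗ A ⟶ A`. -/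
def adOf' {A : C} (m : A ⊗ A ⟶ A) (Δ : A ⟶ A ⊗ A) (S : A ⟶ A) : A ⊗ A ⟶ A :=
  (A ◁ (Δ ≫ (S ▷ A))) ≫ (α_ A A A).inv ≫ ((β_ A A).hom ▷ A) ≫ (m ▷ A) ≫ m

/-- The adjoint morphism `ad_H` of a Hopf monoid. -/
def hAd (H : Hopf C) : hCar H ⊗ hCar H ⟶ hCar H := adOf (hMul H) (hComul H) (hS H)

/-- The right adjoint morphism `ad'_H` of a Hopf monoid. -/
def hAd' (H : Hopf C) : hCar H ⊗ hCar H ⟶ hCar H := adOf' (hMul H) (hComul H) (hS H)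

/-- A monomorphism `i : K ⟶ A` in `Hopf_coc(M)` is (left) normal if there is
`ψ : A ⊗ K ⟶ K` with `i ∘ ψ = ad_A ∘ (Id_A ⊗ i)`. -/
def IsLeftNormal {K A : HopfCoc C} (i : K ⟶ A) : Prop :=
  ∃ ψ : hCar A.obj ⊗ hCar K.obj ⟶ hCar K.obj,
    ψ ≫ uhom i = (hCar A.obj ◁ uhom i) ≫ hAd A.obj

/-- A monomorphism `i : K ⟶ A` in `Hopf_coc(M)` is right normal if there is
`ψ' : K ⊗ A ⟶ K` with `i ∘ ψ' = ad'_A ∘ (i ⊗ Id_A)`. -/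
def IsRightNormal {K A : HopfCoc C} (i : K ⟶ A) : Prop :=
  ∃ ψ' : hCar K.obj ⊗ hCar A.obj ⟶ hCar K.obj,
    ψ' ≫ uhom i = (uhom i ▷ hCar A.obj) ≫ hAd' A.obj

end Adjoint

/-!
In Sweedler notation `ad (a ⊗ b) = a₁ b S(a₂)`. If `A` is commutative this is
`b a₁ S(a₂) = ε(a) b`. Conversely, `a b = a₁ b S(a₂) a₃ = ad (a₁ ⊗ b) a₂` in any Hopf monoid,
so `ad = ε ⊗ Id` turns the right side into `b a`. When `ad = ε ⊗ Id`, the morphism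
`ε_A ⊗ Id_K` witnesses the normality of any `i : K ⟶ A`, as `ad (a ⊗ i k) = i (ε(a) k)`.
-/

open scoped MonObj ComonObj HopfObj

section Comonoid

variable [BraidedCategory C] (A Y : C) [ComonObj A]

/-- `a ⊗ y ↦ a₁ ⊗ y ⊗ a₂`. -/
def comulBraid : A ⊗ Y ⟶ (A ⊗ Y) ⊗ A :=
  (Δ[A] ▷ Y) ≫ (α_ A A Y).hom ≫ (A ◁ (β_ A Y).hom) ≫ (α_ A Y A).inv

theorem comulBraid_counit_whiskerRight :
    comulBraid A Y ≫ ((ε[A] ▷ Y ≫ (λ_ Y).hom) ▷ A) = (β_ A Y).hom := by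
  rw [comulBraid, comp_whiskerRight, Category.assoc, Category.assoc, Category.assoc,
    ← associator_inv_naturality_left_assoc, whisker_exchange_assoc,
    ← associator_naturality_left_assoc, ← comp_whiskerRight_assoc, ComonObj.counit_comul]
  simp

theorem comulBraid_whiskerLeft_counit :
    comulBraid A Y ≫ ((A ⊗ Y) ◁ ε[A]) ≫ (ρ_ (A ⊗ Y)).hom = 𝟙 (A ⊗ Y) := by
  rw [comulBraid, Category.assoc, Category.assoc, Category.assoc,
    ← associator_inv_naturality_right_assoc, ← whiskerLeft_comp_assoc,
    ← BraidedCategory.braiding_naturality_left, whiskerLeft_comp_assoc,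
    ← associator_naturality_middle_assoc, ← comp_whiskerRight_assoc, ComonObj.comul_counit,
    braiding_tensorUnit_left]
  monoidal

/-- Both sides are `a ⊗ y ↦ a₁ ⊗ y ⊗ a₂ ⊗ a₃`. -/
theorem comulBraid_comulBraid :
    comulBraid A Y ≫ (comulBraid A Y ▷ A) =
      comulBraid A Y ≫ ((A ⊗ Y) ◁ Δ[A]) ≫ (α_ (A ⊗ Y) A A).inv := by
  have lhs : comulBraid A Y ≫ (comulBraid A Y ▷ A) =
      (Δ[A] ▷ Y) ≫ ((Δ[A] ▷ A) ▷ Y) ≫ (α_ (A ⊗ A) A Y).hom ≫ ((A ⊗ A) ◁ (β_ A Y).hom) ≫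
        (α_ (A ⊗ A) Y A).inv ≫ (((α_ A A Y).hom ≫ (A ◁ (β_ A Y).hom) ≫ (α_ A Y A).inv) ▷ A) := by
    rw [comulBraid, comp_whiskerRight, Category.assoc, Category.assoc, Category.assoc,
      ← associator_inv_naturality_left_assoc, whisker_exchange_assoc,
      ← associator_naturality_left_assoc]
  have rhs : comulBraid A Y ≫ ((A ⊗ Y) ◁ Δ[A]) ≫ (α_ (A ⊗ Y) A A).inv =
      (Δ[A] ▷ Y) ≫ ((Δ[A] ▷ A) ▷ Y) ≫ ((α_ A A A).hom ▷ Y) ≫ (α_ A (A ⊗ A) Y).hom ≫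
        (A ◁ (β_ (A ⊗ A) Y).hom) ≫ (α_ A Y (A ⊗ A)).inv ≫ (α_ (A ⊗ Y) A A).inv := by
    rw [comulBraid, Category.assoc, Category.assoc, Category.assoc,
      ← associator_inv_naturality_right_assoc, ← whiskerLeft_comp_assoc,
      ← BraidedCategory.braiding_naturality_left, whiskerLeft_comp_assoc,
      ← associator_naturality_middle_assoc, ← comp_whiskerRight_assoc, ComonObj.comul_assoc,
      comp_whiskerRight, comp_whiskerRight, Category.assoc, Category.assoc]
  rw [lhs, rhs, BraidedCategory.braiding_tensor_left_hom]
  monoidal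

end Comonoid

section Hopf

variable [BraidedCategory C] {A : C} [HopfObj A]

theorem adOf_eq_comulBraid :
    adOf μ[A] Δ[A] 𝒮[A] = comulBraid A A ≫ (μ ▷ A) ≫ (A ◁ 𝒮) ≫ μ := by
  rw [adOf, comulBraid, MonoidalCategory.tensorHom_def]
  simp only [Category.assoc]

theorem adOf_eq_counit_of_comm (hcomm : (β_ A A).hom ≫ μ[A] = μ[A]) :
    adOf μ[A] Δ[A] 𝒮[A] = (ε[A] ▷ A) ≫ (λ_ A).hom :=
  calc adOf μ[A] Δ[A] 𝒮[A]
      = comulBraid A A ≫ (((β_ A A).hom ≫ μ) ▷ A) ≫ (A ◁ 𝒮) ≫ μ := by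
        rw [adOf_eq_comulBraid, hcomm]
    _ = (Δ[A] ▷ A) ≫ (β_ (A ⊗ A) A).hom ≫ (α_ A A A).inv ≫ (μ ▷ A) ≫ (A ◁ 𝒮) ≫ μ := by
        -- hexagon identity for `β_ (A ⊗ A) A`
        simp [comulBraid]
    _ = (β_ A A).hom ≫ (A ◁ (Δ ≫ (A ◁ 𝒮) ≫ μ)) ≫ μ := by
        rw [BraidedCategory.braiding_naturality_left_assoc, ← whisker_exchange_assoc,
          ← associator_inv_naturality_right_assoc, ← MonObj.mul_assoc_flip]
        simp only [whiskerLeft_comp, Category.assoc]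
    _ = (ε[A] ▷ A) ≫ (λ_ A).hom := by
        rw [HopfObj.antipode_right, whiskerLeft_comp_assoc, MonObj.mul_one,
          ← BraidedCategory.braiding_naturality_left_assoc, braiding_tensorUnit_left]
        simp

theorem comulBraid_adOf_mul : comulBraid A A ≫ (adOf μ[A] Δ[A] 𝒮[A] ▷ A) ≫ μ = μ :=
  calc comulBraid A A ≫ (adOf μ[A] Δ[A] 𝒮[A] ▷ A) ≫ μ
      = comulBraid A A ≫ (comulBraid A A ▷ A) ≫ ((μ ▷ A ≫ A ◁ 𝒮 ≫ μ) ▷ A) ≫ μ := by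
        rw [adOf_eq_comulBraid, comp_whiskerRight_assoc]
    _ = comulBraid A A ≫ ((A ⊗ A) ◁ Δ) ≫ (α_ (A ⊗ A) A A).inv ≫
          ((μ ▷ A ≫ A ◁ 𝒮 ≫ μ) ▷ A) ≫ μ := by
        rw [reassoc_of% comulBraid_comulBraid A A]
    _ = comulBraid A A ≫ (μ ▷ A) ≫ (A ◁ (Δ ≫ (𝒮 ▷ A) ≫ μ)) ≫ μ := by
        simp only [comp_whiskerRight, whiskerLeft_comp, Category.assoc]
        rw [← associator_inv_naturality_left_assoc, whisker_exchange_assoc,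
          MonObj.mul_assoc_flip, associator_inv_naturality_middle_assoc]
    _ = comulBraid A A ≫ ((A ⊗ A) ◁ ε) ≫ (ρ_ (A ⊗ A)).hom ≫ μ := by
        rw [HopfObj.antipode_left, whiskerLeft_comp_assoc, MonObj.mul_one,
          ← whisker_exchange_assoc, rightUnitor_naturality]
    _ = μ := by
        rw [reassoc_of% comulBraid_whiskerLeft_counit A A]

theorem comm_of_adOf_eq_counit (had : adOf μ[A] Δ[A] 𝒮[A] = (ε[A] ▷ A) ≫ (λ_ A).hom) :
    (β_ A A).hom ≫ μ[A] = μ[A] := by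
  rw [← comulBraid_counit_whiskerRight, Category.assoc, ← had, comulBraid_adOf_mul]

theorem adOf_eq_counit_iff_comm :
    adOf μ[A] Δ[A] 𝒮[A] = (ε[A] ▷ A) ≫ (λ_ A).hom ↔ (β_ A A).hom ≫ μ[A] = μ[A] :=
  ⟨comm_of_adOf_eq_counit, adOf_eq_counit_of_comm⟩

end Hopf

theorem isLeftNormal_of_hAd_eq_counit [BraidedCategory C] {K A : HopfCoc C} (i : K ⟶ A)
    (had : hAd A.obj = (hCounit A.obj ▷ hCar A.obj) ≫ (λ_ (hCar A.obj)).hom) :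
    IsLeftNormal i := by
  refine ⟨(hCounit A.obj ▷ hCar K.obj) ≫ (λ_ (hCar K.obj)).hom, ?_⟩
  rw [had, Category.assoc, ← leftUnitor_naturality, ← whisker_exchange_assoc]

/-- **Statement 19.** For a cocommutative Hopf monoid `A` in a symmetric monoidal category,
`A` is commutative iff `ad_A = ε_A ⊗ Id_A`; consequently, if `A` is commutative then every
monomorphism `i : K ⟶ A` in `Hopf_coc(M)` is normal. -/
theorem commutative_iff_ad_trivial
    [SymmetricCategory C] (A : HopfCoc C) :
    (((β_ (hCar A.obj) (hCar A.obj)).hom ≫ hMul A.obj = hMul A.obj) ↔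
      hAd A.obj = (hCounit A.obj ▷ hCar A.obj) ≫ (λ_ (hCar A.obj)).hom) ∧
    (((β_ (hCar A.obj) (hCar A.obj)).hom ≫ hMul A.obj = hMul A.obj) →
      ∀ (K : HopfCoc C) (i : K ⟶ A), Mono i → IsLeftNormal i) :=
  ⟨adOf_eq_counit_iff_comm.symm,
    fun hcomm _ i _ => isLeftNormal_of_hAd_eq_counit i (adOf_eq_counit_of_comm hcomm)⟩

end HopfSemiabelian
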